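/- arXiv:2312.05477 — 4 statements merged into one kernel-verified Lean document; each statement's English description precedes it below -/
import Mathlib

section
/- Let A be a commutative Noetherian ring and let y ∈ A be a nonzerodivisor contained in the Jacobson radical of A. If A/yA is an integrally closed domain, then A is an integrally closed domain. -/
/-!
Krull's intersection theorem writes every nonzero `a : A` as `y ^ n * c` with `y ∤ c`; as `y` is
a prime nonzerodivisor, this makes `A` a domain.

For normality, localize at the principal prime `(y)`: `A_(y)` is a discrete valuation ring, so
an element `x` of the fraction field that is integral over `A` lies in `A_(y)`. Let `W ⊆ A_(y)`
consist of the `w` with `y ^ k * w ∈ A[x]` for some `k`. Since `A_(y) ∩ y⁻ᵏA = A`, a common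
denominator of `A[x]` outside `(y)` also works for `W`, so `W` is a finite `A`-algebra. The
residue of each `w ∈ W` in `κ(y) = Frac(A/y)` is integral over the normal domain `A/y`, so
`w ≡ t` modulo `y A_(y)` for some `t ∈ A`, and `(w - t)/y ∈ W`. Hence `W ⊆ A + yW`, and
Nakayama's lemma gives `W = A`, so `x ∈ A`.
-/

open Ideal IsLocalRing nonZeroDivisors

section

variable {A : Type*} [CommRing A]

theorem finiteMultiplicity_of_mem_jacobson_bot [IsNoetherianRing A] {y a : A}
    (hyJ : y ∈ jacobson (⊥ : Ideal A)) (ha : a ≠ 0) : FiniteMultiplicity y a := by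
  by_contra! h
  have hmem : a ∈ (⨅ i : ℕ, span {y} ^ i • ⊤ : Submodule A A) := by
    refine (Submodule.mem_iInf _).2 fun i => ?_
    rw [smul_eq_mul, mul_top, span_singleton_pow, mem_span_singleton]
    exact (pow_dvd_pow y i.le_succ).trans (h i)
  rw [iInf_pow_smul_eq_bot_of_le_jacobson _ ((span_singleton_le_iff_mem _).2 hyJ)] at hmem
  exact ha hmem

theorem isDomain_of_prime_of_mem_jacobson_bot [IsNoetherianRing A] {y : A} (hy : Prime y)
    (hynzd : y ∈ A⁰) (hyJ : y ∈ jacobson (⊥ : Ideal A)) : IsDomain A := by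
  have : Nontrivial A := ⟨⟨y, 0, hy.ne_zero⟩⟩
  have : NoZeroDivisors A := by
    refine ⟨fun {a b} hab => ?_⟩
    by_contra! h
    obtain ⟨c, hc, hyc⟩ :=
      (finiteMultiplicity_of_mem_jacobson_bot hyJ h.1).exists_eq_pow_mul_and_not_dvd
    obtain ⟨d, hd, hyd⟩ :=
      (finiteMultiplicity_of_mem_jacobson_bot hyJ h.2).exists_eq_pow_mul_and_not_dvd
    have hcd : c * d = 0 := by
      refine (pow_mem hynzd (multiplicity y a + multiplicity y b)).2 _ ?_
      rw [hc, hd] at hab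
      linear_combination hab
    exact (hy.dvd_or_dvd (hcd ▸ dvd_zero y)).elim hyc hyd
  exact NoZeroDivisors.to_isDomain A

theorem exists_sub_mem_maximalIdeal_of_isIntegral (p : Ideal A) [p.IsPrime]
    [IsIntegrallyClosed (A ⧸ p)] {v : Localization.AtPrime p} (hv : IsIntegral A v) :
    ∃ t : A, v - algebraMap A _ t ∈ maximalIdeal (Localization.AtPrime p) := by
  have hres : IsIntegral (A ⧸ p) (algebraMap _ p.ResidueField v) :=
    (hv.map (IsScalarTower.toAlgHom A _ p.ResidueField)).tower_top
  obtain ⟨t, ht⟩ := IsIntegrallyClosed.isIntegral_iff.mp hres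
  obtain ⟨t, rfl⟩ := Ideal.Quotient.mk_surjective t
  refine ⟨t, ?_⟩
  rw [← residue_eq_zero_iff, map_sub, sub_eq_zero]
  exact ht.symm

section SpanSingleton

variable (y : A) [(span {y}).IsPrime]

theorem maximalIdeal_localization_atPrime_span_singleton :
    maximalIdeal (Localization.AtPrime (span {y})) = span {algebraMap A _ y} := by
  rw [← Localization.AtPrime.map_eq_maximalIdeal, map_span, Set.image_singleton]

theorem isIntegrallyClosed_localization_atPrime_span_singleton [IsDomain A] [IsNoetherianRing A] :
    IsIntegrallyClosed (Localization.AtPrime (span {y})) := by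
  have hm : (maximalIdeal (Localization.AtPrime (span {y}))).IsPrincipal :=
    ⟨_, maximalIdeal_localization_atPrime_span_singleton y⟩
  have : IsPrincipalIdealRing (Localization.AtPrime (span {y})) :=
    ((tfae_of_isNoetherianRing_of_isLocalRing_of_isDomain _).out 4 0).mp hm
  infer_instance

variable {y}

theorem isInteger_of_isInteger_pow_smul [IsDomain A] (hy : y ≠ 0)
    {v : Localization.AtPrime (span {y})} {k : ℕ} (h : IsLocalization.IsInteger A (y ^ k • v)) :
    IsLocalization.IsInteger A v := by
  induction k generalizing v with
  | zero => simpa using h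
  | succ k ih =>
    rw [pow_succ, mul_smul] at h
    obtain ⟨c, hc⟩ := ih h
    have hcy : c ∈ span {y} := by
      rw [← IsLocalization.AtPrime.to_map_mem_maximal_iff (Localization.AtPrime (span {y}))
        (span {y}), hc, maximalIdeal_localization_atPrime_span_singleton, Algebra.smul_def]
      exact mul_mem_right _ _ (mem_span_singleton_self _)
    obtain ⟨c, rfl⟩ := mem_span_singleton'.mp hcy
    refine ⟨c, mul_left_cancel₀ (a := algebraMap A (Localization.AtPrime (span {y})) y) ?_ ?_⟩
    · simpa using hy
    · rw [← map_mul, mul_comm, hc, Algebra.smul_def]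

namespace Subalgebra

variable {B : Subalgebra A (Localization.AtPrime (span {y}))}
  (H : Submonoid.powers (algebraMap A _ y) ≤ B.toSubmonoid)

theorem fg_saturation_powers [IsDomain A] [IsNoetherianRing A] (hy : y ≠ 0)
    (hB : (toSubmodule B).FG) : (toSubmodule (B.saturation _ H)).FG := by
  obtain ⟨d, hd, hdB⟩ := FractionalIdeal.isFractional_of_fg (S := (span {y}).primeCompl) hB
  have hW : IsFractional (span {y}).primeCompl (toSubmodule (B.saturation _ H)) := by
    refine ⟨d, hd, ?_⟩
    rintro w ⟨_, ⟨k, rfl⟩, hk⟩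
    refine isInteger_of_isInteger_pow_smul hy (k := k) ?_
    rw [smul_comm]
    refine hdB _ ?_
    rwa [Algebra.smul_def, map_pow]
  exact FractionalIdeal.fg_of_isNoetherianRing (primeCompl_le_nonZeroDivisors _) ⟨_, hW⟩

theorem saturation_powers_le_one_sup_smul [IsIntegrallyClosed (A ⧸ span {y})]
    (hB : ∀ v ∈ B.saturation _ H, IsIntegral A v) :
    toSubmodule (B.saturation _ H) ≤ 1 ⊔ span {y} • toSubmodule (B.saturation _ H) := by
  intro v hv
  obtain ⟨t, ht⟩ := exists_sub_mem_maximalIdeal_of_isIntegral _ (hB v hv)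
  rw [maximalIdeal_localization_atPrime_span_singleton, mem_span_singleton'] at ht
  obtain ⟨w, hw⟩ := ht
  have hwW : w ∈ B.saturation _ H := by
    refine mem_saturation_of_mul_mem_left (x := algebraMap A _ y) ?_ (Submonoid.mem_powers _)
    rw [mul_comm, hw]
    exact sub_mem hv (algebraMap_mem _ t)
  rw [← sub_add_cancel v (algebraMap A _ t), ← hw, add_comm]
  refine Submodule.add_mem_sup (Submodule.algebraMap_mem t) ?_
  rw [mul_comm, ← Algebra.smul_def]
  exact Submodule.smul_mem_smul (mem_span_singleton_self y) hwW

end Subalgebra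

theorem exists_algebraMap_eq_of_isIntegral [IsDomain A] [IsNoetherianRing A] (hy : y ≠ 0)
    (hyJ : y ∈ jacobson (⊥ : Ideal A)) [IsIntegrallyClosed (A ⧸ span {y})]
    {v : Localization.AtPrime (span {y})} (hv : IsIntegral A v) :
    ∃ t : A, algebraMap A _ t = v := by
  let B := Algebra.adjoin A {v}
  have H : Submonoid.powers (algebraMap A _ y) ≤ B.toSubmonoid :=
    Submonoid.powers_le.2 (B.algebraMap_mem y)
  have hW : (Subalgebra.toSubmodule (B.saturation _ H)).FG :=
    Subalgebra.fg_saturation_powers H hy hv.fg_adjoin_singleton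
  have hW1 : Subalgebra.toSubmodule (B.saturation _ H) ≤ 1 :=
    Submodule.le_of_le_smul_of_le_jacobson_bot hW ((span_singleton_le_iff_mem _).2 hyJ)
      (Subalgebra.saturation_powers_le_one_sup_smul H fun w => IsIntegral.of_mem_of_fg _ hW w)
  exact Submodule.mem_one.mp <|
    hW1 (Subalgebra.le_saturation (H := H) (Algebra.self_mem_adjoin_singleton A v))

end SpanSingleton

theorem isIntegrallyClosed_of_prime_of_mem_jacobson_bot [IsDomain A] [IsNoetherianRing A]
    {y : A} (hy : Prime y) (hyJ : y ∈ jacobson (⊥ : Ideal A))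
    [IsIntegrallyClosed (A ⧸ span {y})] : IsIntegrallyClosed A := by
  have : (span {y}).IsPrime := (span_singleton_prime hy.ne_zero).2 hy
  have := isIntegrallyClosed_localization_atPrime_span_singleton y
  refine (isIntegrallyClosed_iff (FractionRing A)).2 fun {x} hx => ?_
  obtain ⟨v, rfl⟩ := IsIntegrallyClosed.isIntegral_iff.mp
    (hx.tower_top (A := Localization.AtPrime (span {y})))
  obtain ⟨t, rfl⟩ := exists_algebraMap_eq_of_isIntegral hy.ne_zero hyJ
    ((isIntegral_algHom_iff (IsScalarTower.toAlgHom A _ (FractionRing A))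
      (IsFractionRing.injective _ _)).mp hx)
  exact ⟨t, IsScalarTower.algebraMap_apply _ _ _ t⟩

end

/-- **Seydi's theorem** (Statement 2): let `A` be a Noetherian ring and `y` a nonzerodivisor
contained in the Jacobson radical of `A`. If `A/yA` is an integrally closed domain, then
`A` is an integrally closed domain. -/
theorem isIntegrallyClosed_domain_of_quotient_span_singleton
    (A : Type*) [CommRing A] [IsNoetherianRing A]
    (y : A) (hynzd : y ∈ nonZeroDivisors A) (hyJ : y ∈ Ideal.jacobson (⊥ : Ideal A))
    (hdom : IsDomain (A ⧸ Ideal.span {y}))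
    (hicl : IsIntegrallyClosed (A ⧸ Ideal.span {y})) :
    IsDomain A ∧ IsIntegrallyClosed A := by
  have hP : (span {y}).IsPrime := (Quotient.isDomain_iff_prime _).mp hdom
  have : Nontrivial A := (Ideal.Quotient.mk (span {y})).domain_nontrivial
  have hy : Prime y := (span_singleton_prime (nonZeroDivisors.ne_zero hynzd)).mp hP
  have := isDomain_of_prime_of_mem_jacobson_bot hy hynzd hyJ
  exact ⟨this, isIntegrallyClosed_of_prime_of_mem_jacobson_bot hy hyJ⟩
end

section
/- Let (A, m) be a commutative Noetherian local ring with a nonzerodivisor y ∈ m, and let I ⊆ m be an ideal. Assume that the image of y in A/Iⁿ is a nonzerodivisor for all n > 0, that the image of I in A/yA is a normal ideal of A/yA, and that A/yA is an integrally closed domain. Then I is a normal ideal of A. -/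
/-!
Let `B = Iⁿ` and let `x` satisfy an integral equation of degree `m` over `B`. Then every
`b ∈ B ^ (m - 1)` satisfies `b * x ^ j ∈ B ^ j` for all `j`, and since `(y)` is prime we may take
`b ∉ (y)` unless `B ⊆ (y)`; in that case regularity of `y` modulo `B` and Nakayama give `B = 0`,
and `x` is nilpotent in `A`, which is reduced because `A/yA` is.

Otherwise we show `x ∈ B + y ^ c A` for every `c`. Writing `x = z + y ^ c * w` with `z ∈ B`, we get
`b * (y ^ c * w) ^ j ∈ B ^ j`, and regularity of `y` modulo `B ^ j` cancels `y ^ (c * j)`. So the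
image of `w` in the Noetherian domain `A/yA` is "almost integral" over `B̄` with multiplier
`b̄ ≠ 0`; as the Rees algebra of `B̄` is Noetherian, `w̄` is integral over `B̄`, hence lies in
`B̄` by normality, i.e. `w ∈ B + yA`. Krull's intersection theorem for `A/B` then gives `x ∈ B`.
-/

/-- An element `x` of a commutative ring is *integral over an ideal* `I` if it satisfies an
equation `x ^ n + a 1 * x ^ (n - 1) + ⋯ + a n = 0` with `n ≥ 1` and `a i ∈ I ^ i`. -/
def IsIntegralOverIdeal {A : Type*} [CommRing A] (I : Ideal A) (x : A) : Prop :=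
  ∃ n : ℕ, 0 < n ∧ ∃ a : ℕ → A, (∀ i ∈ Finset.Icc 1 n, a i ∈ I ^ i) ∧
    x ^ n + ∑ i ∈ Finset.Icc 1 n, a i * x ^ (n - i) = 0

/-- An ideal `I` is *integrally closed* if every element integral over `I` belongs to `I`. -/
def Ideal.IsIntegrallyClosedIdeal {A : Type*} [CommRing A] (I : Ideal A) : Prop :=
  ∀ x : A, IsIntegralOverIdeal I x → x ∈ I

/-- An ideal `I` is a *normal ideal* if `I ^ n` is integrally closed for all `n > 0`. -/
def Ideal.IsNormalIdeal {A : Type*} [CommRing A] (I : Ideal A) : Prop :=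
  ∀ n : ℕ, 0 < n → (I ^ n).IsIntegrallyClosedIdeal

theorem exists_eq_sum_range_mul_of_isNoetherianRing {R : Type*} [CommRing R] [IsNoetherianRing R]
    (f : ℕ → R) : ∃ k, ∃ c : ℕ → R, f (k + 1) = ∑ j ∈ Finset.range (k + 1), c j * f j := by
  let J : ℕ →o Ideal R := ⟨fun k => Ideal.span (f '' Finset.range (k + 1)), fun k l hkl =>
    Ideal.span_mono (Set.image_mono (by simpa using hkl))⟩
  obtain ⟨k, hk⟩ := monotone_stabilizes_iff_noetherian.mpr inferInstance J
  have hmem : f (k + 1) ∈ J (k + 1) := Ideal.subset_span ⟨k + 1, by simp, rfl⟩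
  rw [← hk (k + 1) k.le_succ] at hmem
  obtain ⟨c, hc⟩ := (Submodule.mem_span_image_finset_iff_exists_fun' R).mp hmem
  exact ⟨k, c, hc.symm⟩

theorem isIntegralOverIdeal_of_pow_eq_sum {R : Type*} [CommRing R] {P : Ideal R} {x : R} {n : ℕ}
    (hn : 0 < n) (d : ℕ → R) (hd : ∀ j < n, d j ∈ P ^ (n - j))
    (hx : x ^ n = ∑ j ∈ Finset.range n, d j * x ^ j) : IsIntegralOverIdeal P x := by
  refine ⟨n, hn, fun i => -d (n - i), fun i hi => ?_, ?_⟩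
  · obtain ⟨hi1, hin⟩ := Finset.mem_Icc.mp hi
    simpa [Nat.sub_sub_self hin] using hd (n - i) (by omega)
  · have : ∑ i ∈ Finset.Icc 1 n, d (n - i) * x ^ (n - i) = ∑ j ∈ Finset.range n, d j * x ^ j :=
      Finset.sum_nbij' (n - ·) (n - ·) (by intro i; simp; omega) (by intro i; simp; omega)
        (by intro i; simp; omega) (by intro i; simp; omega) (fun _ _ => rfl)
    simp only [neg_mul, Finset.sum_neg_distrib, this, hx, add_neg_cancel]

open Polynomial in
theorem isIntegralOverIdeal_of_mul_pow_mem {S : Type*} [CommRing S] [IsDomain S]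
    [IsNoetherianRing S] {P : Ideal S} {b w : S} (hb : b ≠ 0) (h : ∀ j, b * w ^ j ∈ P ^ j) :
    IsIntegralOverIdeal P w := by
  obtain ⟨k, c, hc⟩ := exists_eq_sum_range_mul_of_isNoetherianRing
    (fun j => (⟨monomial j (b * w ^ j), reesAlgebra.monomial_mem.mpr (h j)⟩ : reesAlgebra P))
  have hcoeff := congrArg (fun p : reesAlgebra P => (p : S[X]).coeff (k + 1)) hc
  simp only [coeff_monomial_same, AddSubmonoidClass.coe_finsetSum, MulMemClass.coe_mul,
    finsetSum_coeff] at hcoeff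
  have key : ∀ j ∈ Finset.range (k + 1), ((c j : S[X]) * monomial j (b * w ^ j)).coeff (k + 1) =
      b * ((c j : S[X]).coeff (k + 1 - j) * w ^ j) := by
    intro j hj
    nth_rw 1 [show k + 1 = k + 1 - j + j by simp at hj; omega]
    rw [coeff_mul_monomial]
    ring
  rw [Finset.sum_congr rfl key, ← Finset.mul_sum] at hcoeff
  exact isIntegralOverIdeal_of_pow_eq_sum k.succ_pos (fun j => (c j : S[X]).coeff (k + 1 - j))
    (fun j _ => (c j).2 _) (mul_left_cancel₀ hb hcoeff)

section

variable {A : Type*} [CommRing A]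

theorem IsIntegralOverIdeal.isNilpotent_of_bot {x : A} (hx : IsIntegralOverIdeal (⊥ : Ideal A) x) :
    IsNilpotent x := by
  obtain ⟨m, -, a, ha, heq⟩ := hx
  refine ⟨m, ?_⟩
  rwa [Finset.sum_eq_zero fun i hi => ?_, add_zero] at heq
  obtain ⟨hi1, -⟩ := Finset.mem_Icc.mp hi
  rw [Ideal.mem_bot.mp (Ideal.pow_le_self (by omega) (ha i hi)), zero_mul]

theorem IsIntegralOverIdeal.exists_forall_mul_pow_mem {B : Ideal A} {x : A}
    (hx : IsIntegralOverIdeal B x) : ∃ k, ∀ b ∈ B ^ k, ∀ j, b * x ^ j ∈ B ^ j := by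
  obtain ⟨m, -, a, ha, heq⟩ := hx
  refine ⟨m - 1, fun b hb j => ?_⟩
  induction j using Nat.strong_induction_on with
  | _ j ih =>
    rcases lt_or_ge j m with hjm | hjm
    · exact Ideal.mul_mem_right _ _ (Ideal.pow_le_pow_right (by omega) hb)
    obtain ⟨t, rfl⟩ : ∃ t, j = t + m := ⟨j - m, by omega⟩
    have hxj : b * x ^ (t + m) = -∑ i ∈ Finset.Icc 1 m, a i * (b * x ^ (t + m - i)) := by
      rw [pow_add, eq_neg_of_add_eq_zero_left heq, mul_neg, mul_neg, Finset.mul_sum,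
        Finset.mul_sum]
      refine congrArg _ (Finset.sum_congr rfl fun i hi => ?_)
      rw [show t + m - i = t + (m - i) by simp at hi; omega, pow_add]
      ring
    rw [hxj]
    refine neg_mem (Ideal.sum_mem _ fun i hi => ?_)
    obtain ⟨hi1, him⟩ := Finset.mem_Icc.mp hi
    simpa [← pow_add, Nat.add_sub_cancel' (by omega : i ≤ t + m)] using
      Ideal.mul_mem_mul (ha i hi) (ih (t + m - i) (by omega))

theorem mem_of_pow_mul_mem {J : Ideal A} {y : A}
    (hy : Ideal.Quotient.mk J y ∈ nonZeroDivisors (A ⧸ J)) (e : ℕ) {v : A}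
    (hv : y ^ e * v ∈ J) : v ∈ J := by
  rw [← Ideal.Quotient.eq_zero_iff_mem] at hv ⊢
  rwa [map_mul, map_pow, mul_left_mem_nonZeroDivisors_eq_zero_iff (pow_mem hy e)] at hv

theorem mul_add_pow_mem_pow {B : Ideal A} {b x z : A} (hx : ∀ j, b * x ^ j ∈ B ^ j) (hz : z ∈ B)
    (j : ℕ) : b * (x + z) ^ j ∈ B ^ j := by
  rw [add_pow, Finset.mul_sum]
  refine Ideal.sum_mem _ fun i hi => ?_
  have hij : i ≤ j := Nat.lt_succ_iff.mp (Finset.mem_range.mp hi)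
  have hterm := Ideal.mul_mem_mul (hx i) (Ideal.pow_mem_pow hz (j - i))
  rw [← pow_add, Nat.add_sub_cancel' hij] at hterm
  rw [← mul_assoc, ← mul_assoc]
  exact Ideal.mul_mem_right _ _ hterm

end

section

variable {A : Type*} [CommRing A] [IsNoetherianRing A]

theorem Ideal.iInf_sup_pow_eq_of_le_jacobson (B : Ideal A) {Y : Ideal A} (hY : Y ≤ jacobson ⊥) :
    ⨅ c : ℕ, B ⊔ Y ^ c = B := by
  refine le_antisymm (fun x hx => ?_) (le_iInf fun _ => le_sup_left)
  have hmk : Submodule.Quotient.mk (p := B) x ∈ ⨅ c : ℕ, Y ^ c • (⊤ : Submodule A (A ⧸ B)) := by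
    refine Submodule.mem_iInf _ |>.mpr fun c => ?_
    obtain ⟨z, hz, u, hu, rfl⟩ := Submodule.mem_sup.mp (Submodule.mem_iInf _ |>.mp hx c)
    have : Submodule.Quotient.mk (p := B) (z + u) = u • Submodule.Quotient.mk 1 := by
      rw [← Submodule.Quotient.mk_smul, smul_eq_mul, mul_one, Submodule.Quotient.mk_add,
        (Submodule.Quotient.mk_eq_zero B).mpr hz, zero_add]
    exact this ▸ Submodule.smul_mem_smul hu Submodule.mem_top
  rw [iInf_pow_smul_eq_bot_of_le_jacobson _ hY, Submodule.mem_bot,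
    Submodule.Quotient.mk_eq_zero] at hmk
  exact hmk

theorem Ideal.eq_bot_of_le_span_singleton {J : Ideal A} {y : A} (hy : y ∈ jacobson ⊥)
    (hreg : Quotient.mk J y ∈ nonZeroDivisors (A ⧸ J)) (hJ : J ≤ span {y}) : J = ⊥ := by
  refine Submodule.eq_bot_of_le_smul_of_le_jacobson_bot (span {y}) J (IsNoetherian.noetherian J)
    (fun u hu => ?_) ((span_singleton_le_iff_mem _).mpr hy)
  obtain ⟨v, rfl⟩ := mem_span_singleton'.mp (hJ hu)
  have hv : v ∈ J := mem_of_pow_mul_mem hreg 1 (by rwa [pow_one, mul_comm])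
  rw [mul_comm, ← smul_eq_mul]
  exact Submodule.smul_mem_smul (mem_span_singleton_self y) hv

theorem isReduced_of_isReduced_quotient_span_singleton {y : A} (hy : y ∈ Ideal.jacobson ⊥)
    (hynzd : y ∈ nonZeroDivisors A) [IsReduced (A ⧸ Ideal.span {y})] : IsReduced A := by
  refine ⟨fun z ⟨m, hz⟩ => ?_⟩
  suffices z ∈ ⨅ c : ℕ, ⊥ ⊔ Ideal.span {y} ^ c by
    rwa [Ideal.iInf_sup_pow_eq_of_le_jacobson ⊥
      ((Ideal.span_singleton_le_iff_mem _).mpr hy), Ideal.mem_bot] at this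
  refine Submodule.mem_iInf _ |>.mpr fun c => ?_
  rw [bot_sup_eq]
  induction c with
  | zero => simp
  | succ c ih =>
    obtain ⟨v, rfl⟩ := Ideal.mem_span_singleton'.mp (Ideal.span_singleton_pow y c ▸ ih)
    have hv : v ^ m = 0 := by
      rw [mul_pow, ← pow_mul] at hz
      exact (mul_right_mem_nonZeroDivisors_eq_zero_iff (pow_mem hynzd _)).mp hz
    have hvy : Ideal.Quotient.mk (Ideal.span {y}) v = 0 :=
      IsReduced.eq_zero _ ⟨m, by rw [← map_pow, hv, map_zero]⟩
    obtain ⟨r, rfl⟩ := Ideal.mem_span_singleton'.mp (Ideal.Quotient.eq_zero_iff_mem.mp hvy)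
    rw [Ideal.span_singleton_pow, Ideal.mem_span_singleton']
    exact ⟨r, by ring⟩

end

section

variable {A : Type*} [CommRing A] [IsNoetherianRing A] {y : A} {B : Ideal A}
  [IsDomain (A ⧸ Ideal.span {y})] {b : A}

theorem mem_sup_span_singleton_of_mul_pow_mem
    (hreg : ∀ j, 0 < j → Ideal.Quotient.mk (B ^ j) y ∈ nonZeroDivisors (A ⧸ B ^ j))
    (hB : (B.map (Ideal.Quotient.mk (Ideal.span {y}))).IsIntegrallyClosedIdeal)
    (hb : b ∉ Ideal.span {y}) {c : ℕ} {w : A} (h : ∀ j, b * (y ^ c * w) ^ j ∈ B ^ j) :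
    w ∈ B ⊔ Ideal.span {y} := by
  have hbw : ∀ j, b * w ^ j ∈ B ^ j := by
    rintro (_ | j)
    · simp
    · refine mem_of_pow_mul_mem (hreg _ j.succ_pos) (c * (j + 1)) ?_
      rw [show y ^ (c * (j + 1)) * (b * w ^ (j + 1)) = b * (y ^ c * w) ^ (j + 1) by ring]
      exact h _
  have hbne : Ideal.Quotient.mk (Ideal.span {y}) b ≠ 0 :=
    mt Ideal.Quotient.eq_zero_iff_mem.mp hb
  have hint : IsIntegralOverIdeal (B.map (Ideal.Quotient.mk (Ideal.span {y})))
      (Ideal.Quotient.mk (Ideal.span {y}) w) :=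
    isIntegralOverIdeal_of_mul_pow_mem hbne fun j => by
      simpa only [map_mul, map_pow, Ideal.map_pow] using
        Ideal.mem_map_of_mem (Ideal.Quotient.mk (Ideal.span {y})) (hbw j)
  exact Ideal.mem_quotient_iff_mem_sup.mp (hB _ hint)

theorem mem_sup_span_singleton_pow_of_mul_pow_mem
    (hreg : ∀ j, 0 < j → Ideal.Quotient.mk (B ^ j) y ∈ nonZeroDivisors (A ⧸ B ^ j))
    (hB : (B.map (Ideal.Quotient.mk (Ideal.span {y}))).IsIntegrallyClosedIdeal)
    (hb : b ∉ Ideal.span {y}) {x : A} (hx : ∀ j, b * x ^ j ∈ B ^ j) (c : ℕ) :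
    x ∈ B ⊔ Ideal.span {y} ^ c := by
  induction c with
  | zero => simp
  | succ c ih =>
    obtain ⟨z, hz, u, hu, hzu⟩ := Submodule.mem_sup.mp ih
    obtain ⟨w, rfl⟩ := Ideal.mem_span_singleton'.mp (Ideal.span_singleton_pow y c ▸ hu)
    have hw := mem_sup_span_singleton_of_mul_pow_mem hreg hB hb (c := c) (w := w) fun j => by
      simpa [← hzu, mul_comm] using mul_add_pow_mem_pow hx (neg_mem hz) j
    obtain ⟨z', hz', v, hv, rfl⟩ := Submodule.mem_sup.mp hw
    obtain ⟨r, rfl⟩ := Ideal.mem_span_singleton'.mp hv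
    refine Submodule.mem_sup.mpr ⟨z + y ^ c * z', add_mem hz (Ideal.mul_mem_left _ _ hz'),
      r * y ^ (c + 1), ?_, by rw [← hzu]; ring⟩
    rw [Ideal.span_singleton_pow]
    exact Ideal.mul_mem_left _ _ (Ideal.mem_span_singleton_self _)

end

theorem isNormalIdeal_of_quotient_general
    (A : Type*) [CommRing A] [IsNoetherianRing A] [IsLocalRing A]
    (y : A) (hy : y ∈ IsLocalRing.maximalIdeal A) (hynzd : y ∈ nonZeroDivisors A)
    (I : Ideal A)
    (hreg : ∀ n : ℕ, 0 < n →
      Ideal.Quotient.mk (I ^ n) y ∈ nonZeroDivisors (A ⧸ I ^ n))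
    (hnormal : (I.map (Ideal.Quotient.mk (Ideal.span {y}))).IsNormalIdeal)
    (hdom : IsDomain (A ⧸ Ideal.span {y})) :
    I.IsNormalIdeal := by
  intro n hn x hx
  have hyJ : y ∈ Ideal.jacobson ⊥ := IsLocalRing.maximalIdeal_le_jacobson _ hy
  have hYJ : Ideal.span {y} ≤ Ideal.jacobson ⊥ := (Ideal.span_singleton_le_iff_mem _).mpr hyJ
  have hregn (j : ℕ) (hj : 0 < j) :
      Ideal.Quotient.mk ((I ^ n) ^ j) y ∈ nonZeroDivisors (A ⧸ (I ^ n) ^ j) := by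
    rw [← pow_mul]
    exact hreg _ (Nat.mul_pos hn hj)
  by_cases hIY : I ^ n ≤ Ideal.span {y}
  · have : IsReduced A := isReduced_of_isReduced_quotient_span_singleton hyJ hynzd
    rw [Ideal.eq_bot_of_le_span_singleton hyJ (hreg n hn) hIY] at hx ⊢
    exact hx.isNilpotent_of_bot.eq_zero ▸ zero_mem _
  · obtain ⟨k, hk⟩ := hx.exists_forall_mul_pow_mem
    have : (Ideal.span {y}).IsPrime := (Ideal.Quotient.isDomain_iff_prime _).mp hdom
    obtain ⟨b, hbI, hbY⟩ := SetLike.not_le_iff_exists.mp (mt Ideal.IsPrime.le_of_pow_le hIY)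
    have hnormaln := hnormal n hn
    rw [← Ideal.map_pow] at hnormaln
    rw [← Ideal.iInf_sup_pow_eq_of_le_jacobson (I ^ n) hYJ]
    exact Submodule.mem_iInf _ |>.mpr <|
      mem_sup_span_singleton_pow_of_mul_pow_mem hregn hnormaln hbY (hk b hbI)

/-- let `(A, 𝔪)` be a Noetherian local ring with a nonzerodivisor `y ∈ 𝔪`
and an ideal `I ⊆ 𝔪`.  Assume the image of `y` in `A/Iⁿ` is a nonzerodivisor for all `n > 0`,
the image of `I` in `A/yA` is a normal ideal of `A/yA`, and `A/yA` is an integrally closed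
domain.  Then `I` is a normal ideal of `A`. -/
theorem isNormalIdeal_of_quotient
    (A : Type*) [CommRing A] [IsNoetherianRing A] [IsLocalRing A]
    (y : A) (hy : y ∈ IsLocalRing.maximalIdeal A) (hynzd : y ∈ nonZeroDivisors A)
    (I : Ideal A) (hI : I ≤ IsLocalRing.maximalIdeal A)
    (hreg : ∀ n : ℕ, 0 < n →
      Ideal.Quotient.mk (I ^ n) y ∈ nonZeroDivisors (A ⧸ I ^ n))
    (hnormal : (I.map (Ideal.Quotient.mk (Ideal.span {y}))).IsNormalIdeal)
    (hdom : IsDomain (A ⧸ Ideal.span {y}))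
    (hicl : IsIntegrallyClosed (A ⧸ Ideal.span {y})) :
    I.IsNormalIdeal :=
  isNormalIdeal_of_quotient_general A y hy hynzd I hreg hnormal hdom
end

section
/- Let A be a commutative Noetherian ring, I ⊆ A an ideal, and y ∈ A a nonzerodivisor such that the image of y in A/Iⁿ is a nonzerodivisor for all n > 0. Then the quotient of the Rees ring R₊(I) = ⊕_{n≥0} Iⁿtⁿ ⊆ A[t] by the ideal yR₊(I) is isomorphic, as a graded ring, to the Rees ring of the image ideal (I + yA)/yA in A/yA; in particular R₊(I)/yR₊(I) ≅ ⊕_{n≥0} Iⁿ/(Iⁿ ∩ yA). -/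
set_option synthInstance.maxHeartbeats 1000000
set_option maxHeartbeats 1000000

open Polynomial

/-- let `A` be a Noetherian ring, `I ⊆ A` an ideal and `y ∈ A` a
nonzerodivisor whose image in `A/Iⁿ` is a nonzerodivisor for all `n > 0`.  Then
`R₊(I)/yR₊(I)` is isomorphic, as a graded ring, to the Rees ring of the image ideal
`(I + yA)/yA` of `A/yA`: namely, there is a ring isomorphism sending, for every `n` and
every `a ∈ Iⁿ`, the class of the degree-`n` monomial `a·tⁿ` of `R₊(I)` to the degree-`n`
monomial `ā·tⁿ` of the Rees ring of the image ideal.  (In particular, since the degree-`n`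
component of the latter Rees ring is the image `Iⁿ/(Iⁿ ∩ yA)` of `Iⁿ` in `A/yA`, this
gives `R₊(I)/yR₊(I) ≅ ⊕_{n ≥ 0} Iⁿ/(Iⁿ ∩ yA)`.) -/
theorem exists_gradedRingEquiv_reesAlgebra_quotient
    (A : Type*) [CommRing A] [IsNoetherianRing A] (I : Ideal A)
    (y : A) (hynzd : y ∈ nonZeroDivisors A)
    (hreg : ∀ n : ℕ, 0 < n → ∀ a : A, y * a ∈ I ^ n → a ∈ I ^ n) :
    ∃ φ : (↥(reesAlgebra I) ⧸ Ideal.span {algebraMap A ↥(reesAlgebra I) y}) ≃+*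
        ↥(reesAlgebra (I.map (Ideal.Quotient.mk (Ideal.span {y})))),
      ∀ (n : ℕ) (a : A) (ha : a ∈ I ^ n),
        φ (Ideal.Quotient.mk (Ideal.span {algebraMap A ↥(reesAlgebra I) y})
            ⟨Polynomial.monomial n a, reesAlgebra.monomial_mem.2 ha⟩) =
          ⟨Polynomial.monomial n (Ideal.Quotient.mk (Ideal.span {y}) a),
            reesAlgebra.monomial_mem.2 (by
              rw [← Ideal.map_pow]
              exact Ideal.mem_map_of_mem _ ha)⟩ := by
  classical
  set π : A →+* A ⧸ Ideal.span {y} := Ideal.Quotient.mk (Ideal.span {y}) with hπ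
  set J : Ideal (A ⧸ Ideal.span {y}) := I.map π with hJ
  have hmem : ∀ p : ↥(reesAlgebra I), (p : A[X]).map π ∈ reesAlgebra J := by
    intro p
    rw [mem_reesAlgebra_iff]
    intro i
    rw [coeff_map, hJ, ← Ideal.map_pow]
    exact Ideal.mem_map_of_mem _ ((mem_reesAlgebra_iff _ _).1 p.2 i)
  -- The underlying ring hom
  let Φ : ↥(reesAlgebra I) →+* ↥(reesAlgebra J) :=
    { toFun := fun p => ⟨(p : A[X]).map π, hmem p⟩
      map_one' := by ext1; simp
      map_mul' := fun a b => by ext1; simp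
      map_zero' := by ext1; simp
      map_add' := fun a b => by ext1; simp }
  have hΦ : ∀ p : ↥(reesAlgebra I), (Φ p : (A ⧸ Ideal.span {y})[X]) = (p : A[X]).map π :=
    fun _ => rfl
  have hyalg : ((algebraMap A ↥(reesAlgebra I) y : ↥(reesAlgebra I)) : A[X]) = C y := rfl
  have hπy : π y = 0 := by
    rw [hπ, Ideal.Quotient.eq_zero_iff_mem]
    exact Ideal.mem_span_singleton_self y
  -- Φ kills the span of y
  have hvanish : ∀ x ∈ Ideal.span {algebraMap A ↥(reesAlgebra I) y}, Φ x = 0 := by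
    intro x hx
    obtain ⟨q, rfl⟩ := Ideal.mem_span_singleton'.1 hx
    rw [map_mul]
    convert mul_zero (Φ q)
    ext1
    rw [hΦ, hyalg]
    simp [hπy]
  -- kernel computation
  have hker : ∀ x : ↥(reesAlgebra I), Φ x = 0 →
      x ∈ Ideal.span {algebraMap A ↥(reesAlgebra I) y} := by
    intro x hx
    have hx' : (x : A[X]).map π = 0 := by rw [← hΦ, hx]; rfl
    have hcoeff : ∀ n, ∃ b : A, y * b = (x : A[X]).coeff n := by
      intro n
      have : π ((x : A[X]).coeff n) = 0 := by
        rw [← coeff_map, hx', coeff_zero]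
      rw [hπ, Ideal.Quotient.eq_zero_iff_mem, Ideal.mem_span_singleton] at this
      obtain ⟨b, hb⟩ := this
      exact ⟨b, hb.symm⟩
    choose b hb using hcoeff
    set q : A[X] := ∑ n ∈ (x : A[X]).support, monomial n (b n) with hq
    have hqc : ∀ m, q.coeff m = if m ∈ (x : A[X]).support then b m else 0 := by
      intro m
      rw [hq, finset_sum_coeff]
      simp_rw [coeff_monomial]
      exact Finset.sum_ite_eq' _ m b
    have hyq : C y * q = (x : A[X]) := by
      ext m
      rw [coeff_C_mul, hqc]
      split_ifs with h
      · exact hb m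
      · rw [mul_zero]
        exact (Polynomial.notMem_support_iff.1 h).symm
    have hqmem : q ∈ reesAlgebra I := by
      rw [mem_reesAlgebra_iff]
      intro m
      rw [hqc]
      split_ifs with h
      · rcases Nat.eq_zero_or_pos m with hm | hm
        · subst hm; simp
        · exact hreg m hm (b m) (by rw [hb]; exact (mem_reesAlgebra_iff _ _).1 x.2 m)
      · exact zero_mem _
    rw [Ideal.mem_span_singleton]
    exact ⟨⟨q, hqmem⟩, Subtype.ext (by rw [hyalg] at *; exact hyq.symm)⟩
  -- surjectivity
  have hsurj : Function.Surjective Φ := by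
    rintro ⟨f, hf⟩
    have : ∀ n, ∃ a : A, a ∈ I ^ n ∧ π a = f.coeff n := by
      intro n
      have : f.coeff n ∈ (I ^ n).map π := by
        rw [Ideal.map_pow]
        exact (mem_reesAlgebra_iff _ _).1 hf n
      obtain ⟨a, ha, ha'⟩ := Ideal.mem_map_iff_of_surjective π
        Ideal.Quotient.mk_surjective |>.1 this
      exact ⟨a, ha, ha'⟩
    choose a ha ha' using this
    set p : A[X] := ∑ n ∈ f.support, monomial n (a n) with hp
    have hpmem : p ∈ reesAlgebra I := by
      rw [mem_reesAlgebra_iff]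
      intro m
      rw [hp, finset_sum_coeff]
      simp_rw [coeff_monomial]
      rw [Finset.sum_ite_eq' _ m a]
      split_ifs with h
      · exact ha m
      · exact zero_mem _
    refine ⟨⟨p, hpmem⟩, ?_⟩
    ext1
    rw [hΦ]
    show p.map π = f
    rw [hp, Polynomial.map_sum]
    simp_rw [map_monomial, ha']
    exact (f.as_sum_support).symm
  -- the lifted map
  let φ₀ := Ideal.Quotient.lift (Ideal.span {algebraMap A ↥(reesAlgebra I) y}) Φ hvanish
  have hbij : Function.Bijective φ₀ := by
    constructor
    · rw [injective_iff_map_eq_zero]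
      intro x hx
      obtain ⟨p, rfl⟩ := Ideal.Quotient.mk_surjective x
      rw [Ideal.Quotient.lift_mk] at hx
      rw [Ideal.Quotient.eq_zero_iff_mem]
      exact hker p hx
    · intro z
      obtain ⟨p, hp⟩ := hsurj z
      exact ⟨Ideal.Quotient.mk _ p, by rw [Ideal.Quotient.lift_mk]; exact hp⟩
  refine ⟨RingEquiv.ofBijective φ₀ hbij, ?_⟩
  intro n a ha
  show φ₀ (Ideal.Quotient.mk _ _) = _
  rw [Ideal.Quotient.lift_mk]
  ext1
  rw [hΦ]
  simp [map_monomial]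
end

section
/- Let A = ⊕_{n∈ℤ} Aₙ be a ℤ-graded commutative Noetherian ring. Then the canonical diagonal map A → ∏_m A_m, where m ranges over all graded maximal ideals of A, is injective. In particular, if the localization A_m is a reduced ring for every graded maximal ideal m of A, then A is reduced. -/
/-- For a `ℤ`-graded ring `A = ⊕_{n ∈ ℤ} Aₙ`, an ideal `𝔪` is a *graded maximal ideal*
if it is homogeneous, proper, and maximal among proper homogeneous ideals. -/
def IsGradedMaximalIdeal {A : Type*} [CommRing A] (𝒜 : ℤ → AddSubgroup A) [GradedRing 𝒜]
    (m : Ideal A) : Prop :=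
  m.IsHomogeneous 𝒜 ∧ m ≠ ⊤ ∧
    ∀ J : Ideal A, J.IsHomogeneous 𝒜 → J ≠ ⊤ → m ≤ J → J = m

/-!
If `x ≠ 0`, Noetherianity provides an associated prime `P ⊇ Ann(x)`, and associated primes of a
graded ring are homogeneous. Indeed, if `a y = 0` and `c` is the top-degree component of `a`, then
comparing top-degree components gives `c y_top = 0`, and peeling off the top components of `y` one
at a time yields `c ^ m y = 0`; so `√Ann(y)` contains the top component of each of its elements,
and is therefore homogeneous. By Zorn, `P` lies in a graded maximal ideal `𝔪`, which is prime, and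
`x` does not vanish in `A_𝔪` because `Ann(x) ⊆ 𝔪`.
-/

open DirectSum

section
variable {ι σ M : Type*} [AddCommGroup M] [SetLike σ M] [AddSubgroupClass σ M] (ℳ : ι → σ)

theorem DirectSum.decompose_sub_decompose_apply [DecidableEq ι] [Decomposition ℳ] (y : M) (j : ι) :
    decompose ℳ (y - decompose ℳ y j) = (decompose ℳ y).erase j := by
  ext l
  rw [decompose_sub, decompose_coe, DFinsupp.erase_apply, sub_apply]
  split_ifs with h
  · subst h; rw [of_eq_same, sub_self]
  · rw [of_eq_of_ne _ _ _ h, sub_zero]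

theorem DirectSum.Decomposition.induction_on_max [LinearOrder ι] [Decomposition ℳ] {P : M → Prop}
    (zero : P 0)
    (sub_top : ∀ y j, (∀ l, j < l → decompose ℳ y l = 0) → P (y - decompose ℳ y j) → P y)
    (y : M) : P y := by
  classical
  suffices ∀ (s : Finset ι) (y : M), (decompose ℳ y).support ⊆ s → P y from this _ y subset_rfl
  intro s
  refine Finset.induction_on_max s (fun y hy => ?_) fun j s hs ih y hy => ?_
  · have : decompose ℳ y = 0 := DFinsupp.support_eq_empty.mp (Finset.subset_empty.mp hy)
    rwa [← (decompose ℳ).symm_apply_apply y, this, decompose_symm_zero]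
  · refine sub_top y j (fun l hl => DFinsupp.notMem_support_iff.mp fun hmem => ?_) (ih _ ?_)
    · rcases Finset.mem_insert.mp (hy hmem) with rfl | hls
      · exact lt_irrefl _ hl
      · exact lt_asymm hl (hs l hls)
    · rw [decompose_sub_decompose_apply, DFinsupp.support_erase]
      exact (Finset.erase_subset_erase j hy).trans (Finset.erase_insert_subset j s)

theorem Submodule.isHomogeneous_of_forall_lt_decompose_eq_zero [LinearOrder ι] [Decomposition ℳ]
    {R : Type*} [Ring R] [Module R M] {p : Submodule R M}
    (h : ∀ a ∈ p, ∀ i, (∀ k, i < k → decompose ℳ a k = 0) → (decompose ℳ a i : M) ∈ p) :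
    p.IsHomogeneous ℳ := by
  suffices ∀ a : M, a ∈ p → ∀ i, (decompose ℳ a i : M) ∈ p from fun i a ha => this a ha i
  refine Decomposition.induction_on_max ℳ (fun _ i => by simp) fun a j ha_lt ih ha i => ?_
  have haj : (decompose ℳ a j : M) ∈ p := h a ha j ha_lt
  have hrest := ih (sub_mem ha haj) i
  rw [decompose_sub_decompose_apply, DFinsupp.erase_apply] at hrest
  split_ifs at hrest with hij
  · rwa [hij]
  · exact hrest

end

section
variable {ι σ A : Type*} [CommRing A] [AddCancelCommMonoid ι] [LinearOrder ι]
  [IsOrderedCancelAddMonoid ι] [SetLike σ A] [AddSubgroupClass σ A] {𝒜 : ι → σ} [GradedRing 𝒜]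

theorem DirectSum.coe_decompose_mul_add_of_forall_lt {a b : A} {i j : ι}
    (ha : ∀ k, i < k → decompose 𝒜 a k = 0) (hb : ∀ l, j < l → decompose 𝒜 b l = 0) :
    (decompose 𝒜 (a * b) (i + j) : A) = decompose 𝒜 a i * decompose 𝒜 b j := by
  classical
  rw [decompose_mul, coe_mul_apply]
  refine Finset.sum_eq_single (i, j) (fun ⟨k, l⟩ hkl hne => ?_) (fun hij => ?_)
  · simp only [Finset.mem_filter, Finset.mem_product, DFinsupp.mem_support_iff] at hkl
    obtain ⟨⟨hk, hl⟩, hsum⟩ := hkl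
    have hki : k ≤ i := le_of_not_gt fun h => hk (ha k h)
    have hlj : l ≤ j := le_of_not_gt fun h => hl (hb l h)
    obtain ⟨rfl, rfl⟩ := (add_eq_add_iff_eq_and_eq hki hlj).mp hsum
    exact absurd rfl hne
  · simp only [Finset.mem_filter, Finset.mem_product, DFinsupp.mem_support_iff, ne_eq,
      and_true, not_and_or, not_not] at hij
    rcases hij with h | h <;> simp [h]

theorem DirectSum.exists_pow_decompose_mul_eq_zero_of_mul_eq_zero {a y : A} {i : ι}
    (ha : ∀ k, i < k → decompose 𝒜 a k = 0) (hay : a * y = 0) :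
    ∃ m : ℕ, (decompose 𝒜 a i : A) ^ m * y = 0 := by
  set c : A := ↑(decompose 𝒜 a i)
  have hc : c ∈ 𝒜 i := SetLike.coe_mem _
  -- Removing the top component `y_j` of `y` does not preserve `a * y = 0`, but since
  -- `c * y_j = 0` it preserves `c ^ n * (a * y) = 0` at the cost of one more factor `c`.
  suffices ∀ y : A, ∀ n : ℕ, c ^ n * (a * y) = 0 → ∃ m : ℕ, c ^ m * y = 0 from
    this y 0 (by rw [hay, mul_zero])
  refine Decomposition.induction_on_max 𝒜 (fun _ _ => ⟨0, mul_zero _⟩) fun y j hy_lt ih n hn => ?_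
  set yj : A := ↑(decompose 𝒜 y j)
  have htop : c ^ (n + 1) * yj = 0 := by
    have h := coe_decompose_mul_add_of_left_mem 𝒜 (j := i + j) (b := a * y)
      (SetLike.pow_mem_graded n hc)
    rw [hn, decompose_zero, zero_apply, ZeroMemClass.coe_zero,
      coe_decompose_mul_add_of_forall_lt ha hy_lt] at h
    rw [pow_succ, mul_assoc, h]
  obtain ⟨m, hm⟩ := ih (n + 1) <| by
    calc c ^ (n + 1) * (a * (y - yj)) = c * (c ^ n * (a * y)) - a * (c ^ (n + 1) * yj) := by ring
      _ = 0 := by rw [hn, htop]; ring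
  refine ⟨m + (n + 1), ?_⟩
  calc c ^ (m + (n + 1)) * y = c ^ (n + 1) * (c ^ m * (y - yj)) + c ^ m * (c ^ (n + 1) * yj) := by
        ring
    _ = 0 := by rw [hm, htop]; ring

theorem DirectSum.exists_pow_decompose_mul_eq_zero_of_pow_mul_eq_zero {a : A} {i : ι}
    (ha : ∀ k, i < k → decompose 𝒜 a k = 0) (n : ℕ) {y : A} (hy : a ^ n * y = 0) :
    ∃ m : ℕ, (decompose 𝒜 a i : A) ^ m * y = 0 := by
  induction n generalizing y with
  | zero => exact ⟨0, by simpa using hy⟩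
  | succ n ih =>
    obtain ⟨m, hm⟩ := exists_pow_decompose_mul_eq_zero_of_mul_eq_zero ha
      (y := a ^ n * y) (by rw [← mul_assoc, ← pow_succ', hy])
    obtain ⟨m', hm'⟩ := ih (y := (decompose 𝒜 a i : A) ^ m * y) (by rw [mul_left_comm, hm])
    exact ⟨m' + m, by rw [pow_add, mul_assoc, hm']⟩

theorem Ideal.isHomogeneous_radical_colon_singleton (y : A) :
    ((⊥ : Submodule A A).colon {y}).radical.IsHomogeneous 𝒜 := by
  have mem_iff : ∀ b : A, b ∈ ((⊥ : Submodule A A).colon {y}).radical ↔ ∃ n : ℕ, b ^ n * y = 0 :=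
    fun b => by simp [Ideal.mem_radical_iff, Submodule.mem_colon_singleton]
  refine Submodule.isHomogeneous_of_forall_lt_decompose_eq_zero 𝒜 fun a ha i ha_lt => ?_
  obtain ⟨n, hn⟩ := (mem_iff a).mp ha
  exact (mem_iff _).mpr (exists_pow_decompose_mul_eq_zero_of_pow_mul_eq_zero ha_lt n hn)

theorem IsAssociatedPrime.isHomogeneous {P : Ideal A} (hP : IsAssociatedPrime P A) :
    P.IsHomogeneous 𝒜 := by
  obtain ⟨y, rfl⟩ := hP.eq_radical_colon
  exact Ideal.isHomogeneous_radical_colon_singleton y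

end

section
variable {A : Type*} [CommRing A] {𝒜 : ℤ → AddSubgroup A} [GradedRing 𝒜]

theorem exists_isGradedMaximalIdeal_le {I : Ideal A} (hI : I.IsHomogeneous 𝒜)
    (hI_ne_top : I ≠ ⊤) : ∃ m, IsGradedMaximalIdeal 𝒜 m ∧ I ≤ m := by
  let S : Set (Ideal A) := {J | J.IsHomogeneous 𝒜 ∧ J ≠ ⊤ ∧ I ≤ J}
  have chain_bdd : ∀ c ⊆ S, IsChain (· ≤ ·) c → ∀ J ∈ c, ∃ ub ∈ S, ∀ K ∈ c, K ≤ ub := by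
    intro c hcS hc J hJ
    refine ⟨sSup c, ⟨Ideal.IsHomogeneous.sSup fun K hK => (hcS hK).1, ?_,
      (hcS hJ).2.2.trans (le_sSup hJ)⟩, fun K hK => le_sSup hK⟩
    rw [Ne, Ideal.eq_top_iff_one, Submodule.mem_sSup_of_directed ⟨J, hJ⟩ hc.directedOn]
    rintro ⟨K, hK, h1⟩
    exact (hcS hK).2.1 ((Ideal.eq_top_iff_one K).mpr h1)
  obtain ⟨m, hIm, ⟨hm, hm_ne_top, -⟩, hmax⟩ :=
    zorn_le_nonempty₀ S chain_bdd I ⟨hI, hI_ne_top, le_rfl⟩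
  exact ⟨m, ⟨hm, hm_ne_top, fun J hJ hJ_ne_top hmJ =>
    (hmax ⟨hJ, hJ_ne_top, hIm.trans hmJ⟩ hmJ).antisymm hmJ⟩, hIm⟩

theorem IsGradedMaximalIdeal.isPrime {m : Ideal A} (hm : IsGradedMaximalIdeal 𝒜 m) :
    m.IsPrime := by
  obtain ⟨hm_hom, hm_ne_top, hmax⟩ := hm
  have sup_eq_top : ∀ u, SetLike.IsHomogeneousElem 𝒜 u → u ∉ m → m ⊔ Ideal.span {u} = ⊤ :=
    fun u hu hum => by
      by_contra hne
      have hhom := hm_hom.sup (Ideal.homogeneous_span 𝒜 {u} (by simpa using hu))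
      exact hum (hmax _ hhom hne le_sup_left ▸
        Ideal.mem_sup_right (Ideal.mem_span_singleton_self u))
  refine hm_hom.isPrime_of_homogeneous_mem_or_mem hm_ne_top fun {u v} hu hv huv => ?_
  by_contra! ⟨hum, hvm⟩
  refine hm_ne_top (eq_top_iff.mpr ?_)
  calc ⊤ = (m ⊔ Ideal.span {u}) * (m ⊔ Ideal.span {v}) := by
        rw [sup_eq_top u hu hum, sup_eq_top v hv hvm, Ideal.top_mul]
    _ ≤ m := by
      simp only [Ideal.sup_mul, Ideal.mul_sup, Ideal.span_singleton_mul_span_singleton, sup_le_iff]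
      exact ⟨⟨Ideal.mul_le_right, Ideal.mul_le_right⟩, Ideal.mul_le_left,
        (Ideal.span_singleton_le_iff_mem m).mpr huv⟩

theorem exists_isGradedMaximalIdeal_colon_le [IsNoetherianRing A] {x : A} (hx : x ≠ 0) :
    ∃ m, IsGradedMaximalIdeal 𝒜 m ∧ (⊥ : Submodule A A).colon {x} ≤ m := by
  obtain ⟨P, hP, hxP⟩ := exists_le_isAssociatedPrime_of_isNoetherianRing A x hx
  obtain ⟨m, hm, hPm⟩ := exists_isGradedMaximalIdeal_le (𝒜 := 𝒜) hP.isHomogeneous hP.isPrime.ne_top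
  exact ⟨m, hm, hxP.trans hPm⟩

theorem eq_zero_of_forall_isGradedMaximalIdeal_algebraMap_eq_zero [IsNoetherianRing A] {x : A}
    (hx : ∀ m : Ideal A, IsGradedMaximalIdeal 𝒜 m → ∀ [m.IsPrime],
      algebraMap A (Localization.AtPrime m) x = 0) : x = 0 := by
  by_contra hx0
  obtain ⟨m, hm, hann⟩ := exists_isGradedMaximalIdeal_colon_le (𝒜 := 𝒜) hx0
  have := hm.isPrime
  obtain ⟨⟨s, hs⟩, hsx⟩ := (IsLocalization.map_eq_zero_iff m.primeCompl _ x).mp (hx m hm)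
  exact hs (hann (Submodule.mem_colon_singleton.mpr hsx))

end

/-- for a `ℤ`-graded Noetherian ring `A`, the canonical diagonal map
`A → ∏_𝔪 A_𝔪`, where `𝔪` ranges over the graded maximal ideals of `A` (which are
automatically prime, whence the primality instance), is injective; in particular, if every
localization `A_𝔪` is reduced then `A` is reduced. -/
theorem injective_diagonal_to_localizations_at_gradedMaximal
    (A : Type*) [CommRing A] [IsNoetherianRing A]
    (𝒜 : ℤ → AddSubgroup A) [GradedRing 𝒜] :
    (∀ x : A, (∀ (m : Ideal A), IsGradedMaximalIdeal 𝒜 m →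
        ∀ [m.IsPrime], algebraMap A (Localization.AtPrime m) x = 0) → x = 0) ∧
      ((∀ (m : Ideal A), IsGradedMaximalIdeal 𝒜 m →
        ∀ [m.IsPrime], IsReduced (Localization.AtPrime m)) → IsReduced A) := by
  refine ⟨fun x => eq_zero_of_forall_isGradedMaximalIdeal_algebraMap_eq_zero,
    fun hred => ⟨fun x hx => eq_zero_of_forall_isGradedMaximalIdeal_algebraMap_eq_zero (𝒜 := 𝒜)
      fun m hm _ => ?_⟩⟩
  have := hred m hm
  exact (hx.map (algebraMap A (Localization.AtPrime m))).eq_zero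
end
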